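/- Define f(A) = (1−λ)x(v) + λ·M(A) − p|A| for A ⊆ E, where M(A) is the uniform average over all |A|-element subsets R of N of (1/k)Σ_{w∈(N\R)∪A} x(w). Then for every A ⊆ E with |A| ≤ k, f(A) = f(∅) + (λ/k)(Σ_{w∈A} x(w) − (|A|/k)σ) − p|A|; in particular, f is a modular set function of A. (This is equation (9) of the paper, derived from equation (8).) -/

import Mathlib

/-!
Removing a uniformly random `m`-subset `R` of the `k` old in-neighbours removes, in expectation,
the fraction `m / k` of their total health `σ`: each `w ∈ N` lies in exactly `C(k-1, m-1)` of the
`C(k, m)` subsets, and `C(k-1, m-1) / C(k, m) = m / k`. Hence the expected mean health after the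
swap is `(σ + ∑_{w ∈ A} x w - (m / k) σ) / k`, which is affine in `∑_{w ∈ A} x w` and `|A|`.
-/

open Finset

namespace Finset

variable {α : Type*} [DecidableEq α]

theorem card_filter_mem_powersetCard_add_one {s : Finset α} {w : α} (hw : w ∈ s) (n : ℕ) :
    #{R ∈ s.powersetCard (n + 1) | w ∈ R} = (#s - 1).choose n := by
  simpa only [singleton_subset_iff, card_singleton, Nat.add_sub_cancel] using
    card_filter_powersetCard_subset {w} s (n + 1) (singleton_subset_iff.2 hw) (by simp)

theorem sum_powersetCard_add_one_sum {M : Type*} [AddCommMonoid M] (s : Finset α) (n : ℕ)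
    (f : α → M) :
    ∑ R ∈ s.powersetCard (n + 1), ∑ w ∈ R, f w = (#s - 1).choose n • ∑ w ∈ s, f w := by
  calc ∑ R ∈ s.powersetCard (n + 1), ∑ w ∈ R, f w
      = ∑ R ∈ s.powersetCard (n + 1), ∑ w ∈ s, if w ∈ R then f w else 0 := by
        refine sum_congr rfl fun R hR => ?_
        rw [sum_ite_mem, inter_eq_right.2 (mem_powersetCard.1 hR).1]
    _ = ∑ w ∈ s, #{R ∈ s.powersetCard (n + 1) | w ∈ R} • f w := by
        rw [sum_comm]
        exact sum_congr rfl fun w _ => by rw [← sum_filter, sum_const]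
    _ = (#s - 1).choose n • ∑ w ∈ s, f w := by
        rw [smul_sum]
        exact sum_congr rfl fun w hw => by rw [card_filter_mem_powersetCard_add_one hw]

variable {K : Type*} [Field K] [CharZero K]

theorem inv_choose_mul_sum_powersetCard_sum {s : Finset α} {n : ℕ} (hn : n ≤ #s) (f : α → K) :
    ((#s).choose n : K)⁻¹ * ∑ R ∈ s.powersetCard n, ∑ w ∈ R, f w
      = (n / #s : K) * ∑ w ∈ s, f w := by
  rcases n with _ | n
  · simp
  obtain ⟨k, hk⟩ : ∃ k, #s = k + 1 := ⟨#s - 1, by omega⟩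
  have hchoose : ((k + 1 : ℕ) : K) * k.choose n = (k + 1).choose (n + 1) * (n + 1 : ℕ) := by
    exact_mod_cast Nat.add_one_mul_choose_eq k n
  have hpos : ((k + 1).choose (n + 1) : K) ≠ 0 := Nat.cast_ne_zero.2 (Nat.choose_pos (by omega)).ne'
  rw [sum_powersetCard_add_one_sum, hk, Nat.add_sub_cancel, nsmul_eq_mul]
  field_simp
  linear_combination (∑ w ∈ s, f w) * hchoose

theorem inv_choose_mul_sum_powersetCard_sum_sdiff_union {s t : Finset α} (hst : Disjoint s t)
    (ht : #t ≤ #s) (f : α → K) :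
    ((#s).choose #t : K)⁻¹ * ∑ R ∈ s.powersetCard #t, ∑ w ∈ (s \ R) ∪ t, f w
      = ∑ w ∈ s, f w + ∑ w ∈ t, f w - (#t / #s : K) * ∑ w ∈ s, f w := by
  have hpos : ((#s).choose #t : K) ≠ 0 := Nat.cast_ne_zero.2 (Nat.choose_pos ht).ne'
  have hswap : ∀ R ∈ s.powersetCard #t,
      ∑ w ∈ (s \ R) ∪ t, f w = (∑ w ∈ s, f w + ∑ w ∈ t, f w) - ∑ w ∈ R, f w := by
    intro R hR
    rw [sum_union (hst.mono_left sdiff_subset), sum_sdiff_eq_sub (mem_powersetCard.1 hR).1]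
    ring
  rw [sum_congr rfl hswap, sum_sub_distrib, mul_sub, ← inv_choose_mul_sum_powersetCard_sum ht,
    sum_const, card_powersetCard, nsmul_eq_mul, inv_mul_cancel_left₀ hpos]

end Finset

theorem stmt_8_general {α : Type*} [DecidableEq α] (v : α) (N E : Finset α) (k : ℕ)
    (hN : N.card = k) (hdisj : Disjoint N E)
    (x : α → ℝ) (lam p : ℝ) (σ : ℝ) (hσ : σ = ∑ u ∈ N, x u)
    (M : Finset α → ℝ)
    (hM : ∀ A : Finset α, M A =
      (1 / (k.choose A.card : ℝ)) *
        ∑ R ∈ N.powersetCard A.card, (1 / (k : ℝ)) * ∑ w ∈ (N \ R) ∪ A, x w)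
    (f : Finset α → ℝ)
    (hf : ∀ A : Finset α, f A = (1 - lam) * x v + lam * M A - p * A.card) :
    ∀ A ⊆ E, A.card ≤ k →
      f A = f ∅ + (lam / k) * (∑ w ∈ A, x w - ((A.card : ℝ) / k) * σ)
              - p * A.card := by
  have hMean : ∀ A ⊆ E, A.card ≤ k →
      M A = (σ + ∑ w ∈ A, x w - ((A.card : ℝ) / k) * σ) / k := by
    intro A hA hAk
    subst hσ hN
    rw [hM, ← mul_sum, one_div, one_div, mul_left_comm,
      inv_choose_mul_sum_powersetCard_sum_sdiff_union (hdisj.mono_right hA) hAk]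
    ring
  intro A hA hAk
  rw [hf, hf, hMean A hA hAk, hMean ∅ (empty_subset E) (Nat.zero_le k)]
  simp only [card_empty, Nat.cast_zero, sum_empty]
  ring

/-- Fix a node `v` with in-neighborhood `N` of size `k ≥ 1`, a
finite set `E` of candidate new in-neighbors disjoint from `N`, health values
`x`, parameter `lam` and penalty `p`, and write `σ = ∑ u ∈ N, x u`.  Define
`M A` as the uniform average over all `|A|`-element subsets `R` of `N` of
`(1/k) ∑_{w ∈ (N \ R) ∪ A} x w`, and
`f A = (1-lam) * x v + lam * M A - p * |A|`.
Then for every `A ⊆ E` with `|A| ≤ k`,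
`f A = f ∅ + (lam/k) * (∑_{w ∈ A} x w - (|A|/k) σ) - p * |A|`;
in particular `f` is a modular set function of `A`. -/
theorem stmt_8 {α : Type*} [DecidableEq α] (v : α) (N E : Finset α) (k : ℕ)
    (hk : 1 ≤ k) (hN : N.card = k) (hdisj : Disjoint N E)
    (x : α → ℝ) (lam p : ℝ) (σ : ℝ) (hσ : σ = ∑ u ∈ N, x u)
    (M : Finset α → ℝ)
    (hM : ∀ A : Finset α, M A =
      (1 / (k.choose A.card : ℝ)) *
        ∑ R ∈ N.powersetCard A.card, (1 / (k : ℝ)) * ∑ w ∈ (N \ R) ∪ A, x w)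
    (f : Finset α → ℝ)
    (hf : ∀ A : Finset α, f A = (1 - lam) * x v + lam * M A - p * A.card) :
    ∀ A ⊆ E, A.card ≤ k →
      f A = f ∅ + (lam / k) * (∑ w ∈ A, x w - ((A.card : ℝ) / k) * σ)
              - p * A.card :=
  stmt_8_general v N E k hN hdisj x lam p σ hσ M hM f hf
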